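/- arXiv:2603.20329 — 2 statements merged into one kernel-verified Lean document; each statement's English description precedes it below -/
import Mathlib

section
/- Let (Ω, 𝒜, ν₀) be a probability space and h ∈ L^∞(ν₀) with ∫ h dν₀ = 0. Define Z(h) = ∫ e^h dν₀ and the probability density w_h = e^h / Z(h). Then for any ξ ∈ L^∞(ν₀) with ∫ ξ dν₀ = 0, the map ε ↦ w_{h+εξ} is differentiable at ε = 0 in L^1(ν₀), with derivative w_h · (ξ − E_{ρ_h}[ξ]), where E_{ρ_h}[ξ] = ∫ ξ w_h dν₀. -/
open MeasureTheory Filter Topology Real ProbabilityTheory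

/-!
The density of the perturbed measure factors as `w_{h+εξ} = w_h · e^{εξ} / E_{ρ_h}[e^{εξ}]`, where
`ρ_h = ν.tilted h` and the denominator is the moment generating function `mgf ξ ρ_h ε`. So the
`L¹(ν)` error equals the `L¹(ρ_h)` norm of `e^{εξ} / E_{ρ_h}[e^{εξ}] - 1 - ε (ξ - E_{ρ_h}[ξ])`.
For bounded `ξ` this is `O(ε²)` uniformly on `Ω`: apply `|e^t - 1 - t| ≤ t²` (for `|t| ≤ 1`) to
the numerator pointwise and to the denominator under the integral.
-/

theorem abs_div_sub_one_sub_sub_le {a z u v K : ℝ} (ha : |a - 1 - u| ≤ K ^ 2)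
    (hz : |z - 1 - v| ≤ K ^ 2) (hu : |u| ≤ K) (hv : |v| ≤ K) (hK : K ≤ 1 / 2) :
    |a / z - 1 - (u - v)| ≤ 20 * K ^ 2 := by
  have hK0 : 0 ≤ K := (abs_nonneg u).trans hu
  have hz_lower : 1 / 4 ≤ z := by
    have := (abs_le.1 hz).1; have := (abs_le.1 hv).1; nlinarith
  have hz1 : |z - 1| ≤ 3 / 2 * K := by
    calc |z - 1| = |(z - 1 - v) + v| := by ring_nf
      _ ≤ K ^ 2 + K := (abs_add_le _ _).trans (add_le_add hz hv)
      _ ≤ 3 / 2 * K := by nlinarith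
  have hnum : |(a - 1 - u) - (z - 1 - v) - (u - v) * (z - 1)| ≤ 5 * K ^ 2 := by
    calc _ ≤ |a - 1 - u| + |z - 1 - v| + |u - v| * |z - 1| := by
          rw [← abs_mul]; exact (abs_sub _ _).trans (add_le_add_left (abs_sub _ _) _)
      _ ≤ K ^ 2 + K ^ 2 + (K + K) * (3 / 2 * K) := by
          gcongr; exact (abs_sub _ _).trans (add_le_add hu hv)
      _ = 5 * K ^ 2 := by ring
  have hz0 : 0 < z := by linarith
  rw [show a / z - 1 - (u - v) = ((a - 1 - u) - (z - 1 - v) - (u - v) * (z - 1)) / z by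
    field_simp; ring, abs_div, abs_of_pos hz0, div_le_iff₀ hz0]
  nlinarith

theorem abs_mul_le_abs_mul_of_abs_le {ε s M : ℝ} (hs : |s| ≤ M) : |ε * s| ≤ |ε| * M := by
  rw [abs_mul]; exact mul_le_mul_of_nonneg_left hs (abs_nonneg ε)

theorem abs_exp_mul_sub_one_sub_le {ε s M : ℝ} (hs : |s| ≤ M) (hε : |ε| * M ≤ 1) :
    |exp (ε * s) - 1 - ε * s| ≤ (|ε| * M) ^ 2 := by
  have hεs := abs_mul_le_abs_mul_of_abs_le (ε := ε) hs
  calc _ ≤ (ε * s) ^ 2 := abs_exp_sub_one_sub_id_le (hεs.trans hε)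
    _ = |ε * s| ^ 2 := (sq_abs _).symm
    _ ≤ (|ε| * M) ^ 2 := pow_le_pow_left₀ (abs_nonneg _) hεs 2

theorem integrable_exp_of_abs_le {Ω : Type*} [MeasurableSpace Ω] {μ : Measure Ω}
    [IsFiniteMeasure μ] {f : Ω → ℝ} {C : ℝ} (hf : AEMeasurable f μ) (hC : ∀ x, |f x| ≤ C) :
    Integrable (fun x => exp (f x)) μ :=
  .of_bound hf.exp.aestronglyMeasurable (exp C) (ae_of_all _ fun x => by
    rw [Real.norm_eq_abs, abs_exp]; exact exp_le_exp.2 ((le_abs_self _).trans (hC x)))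

section ExpMoments

variable {Ω : Type*} [MeasurableSpace Ω] {ρ : Measure Ω} [IsProbabilityMeasure ρ]
  {ξ : Ω → ℝ} {M : ℝ}

theorem abs_mgf_sub_one_sub_le (hξm : AEMeasurable ξ ρ) (hξb : ∀ x, |ξ x| ≤ M) {ε : ℝ}
    (hε : |ε| * M ≤ 1) : |mgf ξ ρ ε - 1 - ε * ∫ x, ξ x ∂ρ| ≤ (|ε| * M) ^ 2 := by
  have hξi : Integrable ξ ρ := .of_bound hξm.aestronglyMeasurable M (ae_of_all _ hξb)
  have hexpi : Integrable (fun x => exp (ε * ξ x)) ρ :=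
    integrable_exp_of_abs_le (hξm.const_mul ε) fun x => abs_mul_le_abs_mul_of_abs_le (hξb x)
  have hrem : mgf ξ ρ ε - 1 - ε * ∫ x, ξ x ∂ρ = ∫ x, (exp (ε * ξ x) - 1 - ε * ξ x) ∂ρ := by
    have hexpi' : Integrable (fun x => exp (ε * ξ x) - 1) ρ := hexpi.sub (integrable_const 1)
    rw [integral_sub hexpi' (hξi.const_mul ε),
      integral_sub hexpi (integrable_const 1), integral_const_mul]
    simp [mgf]
  rw [hrem]
  simpa using norm_integral_le_of_norm_le_const (μ := ρ)
    (f := fun x => exp (ε * ξ x) - 1 - ε * ξ x)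
    (ae_of_all _ fun x => abs_exp_mul_sub_one_sub_le (hξb x) hε)

theorem abs_exp_div_mgf_sub_le (hξm : AEMeasurable ξ ρ) (hξb : ∀ x, |ξ x| ≤ M) {ε : ℝ}
    (hε : |ε| * M ≤ 1 / 2) (x : Ω) :
    |exp (ε * ξ x) / mgf ξ ρ ε - 1 - ε * (ξ x - ∫ y, ξ y ∂ρ)| ≤ 20 * (|ε| * M) ^ 2 := by
  have hmean : |∫ y, ξ y ∂ρ| ≤ M := by
    simpa using norm_integral_le_of_norm_le_const (μ := ρ) (f := ξ) (ae_of_all _ hξb)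
  rw [mul_sub]
  exact abs_div_sub_one_sub_sub_le (abs_exp_mul_sub_one_sub_le (hξb x) (by linarith))
    (abs_mgf_sub_one_sub_le hξm hξb (by linarith)) (abs_mul_le_abs_mul_of_abs_le (hξb x))
    (abs_mul_le_abs_mul_of_abs_le hmean) hε

end ExpMoments

section ExpDensity

variable {Ω : Type*} [MeasurableSpace Ω] {μ : Measure Ω}

noncomputable def expDensity (μ : Measure Ω) (g : Ω → ℝ) (x : Ω) : ℝ :=
  exp (g x) / ∫ y, exp (g y) ∂μ

theorem expDensity_pos [NeZero μ] {g : Ω → ℝ} (hg : Integrable (fun x => exp (g x)) μ) (x : Ω) :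
    0 < expDensity μ g x :=
  div_pos (exp_pos _) (integral_exp_pos hg)

theorem integral_expDensity_mul (g F : Ω → ℝ) :
    ∫ x, expDensity μ g x * F x ∂μ = ∫ x, F x ∂(μ.tilted g) :=
  (integral_tilted g F).symm

theorem expDensity_add {f g : Ω → ℝ} (hf : ∫ y, exp (f y) ∂μ ≠ 0) (x : Ω) :
    expDensity μ (fun y => f y + g y) x
      = expDensity μ f x * (exp (g x) / ∫ y, exp (g y) ∂(μ.tilted f)) := by
  rw [expDensity, expDensity, integral_exp_tilted, exp_add]
  simp only [Pi.add_apply]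
  field_simp

theorem expDensity_add_mul_sub {f ξ : Ω → ℝ} (hf : ∫ y, exp (f y) ∂μ ≠ 0) (ε m : ℝ) (x : Ω) :
    expDensity μ (fun y => f y + ε * ξ y) x - expDensity μ f x
        - ε * (expDensity μ f x * (ξ x - m))
      = expDensity μ f x * (exp (ε * ξ x) / mgf ξ (μ.tilted f) ε - 1 - ε * (ξ x - m)) := by
  rw [expDensity_add hf, mgf]
  ring

end ExpDensity

theorem tendsto_div_abs_nhdsNE_zero_of_abs_le_sq {F : ℝ → ℝ} {C : ℝ}
    (hF : ∀ᶠ ε in 𝓝 0, |F ε| ≤ C * ε ^ 2) :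
    Tendsto (fun ε => F ε / |ε|) (𝓝[≠] 0) (𝓝 0) := by
  have hFo : F =o[𝓝 0] fun ε => ε :=
    (Asymptotics.IsBigO.of_bound C (by simpa using hF)).trans_isLittleO
      (Asymptotics.isLittleO_pow_id one_lt_two)
  exact hFo.norm_right.tendsto_div_nhds_zero.mono_left nhdsWithin_le_nhds

theorem exp_normalization_hasDerivAt_L1_general
    {Ω : Type*} [MeasurableSpace Ω] (ν : Measure Ω) [IsProbabilityMeasure ν]
    (h ξ : Ω → ℝ) (hhm : Measurable h) (hξm : Measurable ξ)
    (M : ℝ) (hhb : ∀ x, |h x| ≤ M) (hξb : ∀ x, |ξ x| ≤ M)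
    (w : (Ω → ℝ) → Ω → ℝ)
    (hw : ∀ g : Ω → ℝ, w g = fun x => Real.exp (g x) / ∫ y, Real.exp (g y) ∂ν) :
    Tendsto
      (fun ε : ℝ =>
        (∫ x, |w (fun y => h y + ε * ξ y) x - w h x
            - ε * (w h x * (ξ x - ∫ y, ξ y * w h y ∂ν))| ∂ν) / |ε|)
      (𝓝[≠] (0:ℝ)) (𝓝 0) := by
  obtain rfl : w = expDensity ν := funext hw
  have hexp_int := integrable_exp_of_abs_le (μ := ν) hhm.aemeasurable hhb
  have := isProbabilityMeasure_tilted hexp_int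
  have hmean : ∫ y, ξ y * expDensity ν h y ∂ν = ∫ y, ξ y ∂(ν.tilted h) := by
    simp_rw [mul_comm (ξ _), integral_expDensity_mul]
  simp_rw [hmean, expDensity_add_mul_sub (integral_exp_pos hexp_int).ne', abs_mul,
    abs_of_pos (expDensity_pos hexp_int _), integral_expDensity_mul]
  have hsmall : ∀ᶠ ε in 𝓝 (0:ℝ), |ε| * M ≤ 1 / 2 :=
    ((continuous_abs.mul continuous_const).tendsto' (0:ℝ) 0 (by simp)).eventually
      (ge_mem_nhds (by norm_num))
  refine tendsto_div_abs_nhdsNE_zero_of_abs_le_sq (C := 20 * M ^ 2) ?_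
  filter_upwards [hsmall] with ε hε
  rw [abs_of_nonneg (integral_nonneg fun _ => abs_nonneg _)]
  calc _ ≤ ∫ _, 20 * (|ε| * M) ^ 2 ∂(ν.tilted h) :=
        integral_mono_of_nonneg (ae_of_all _ fun _ => abs_nonneg _) (integrable_const _)
          (ae_of_all _ (abs_exp_div_mgf_sub_le hξm.aemeasurable hξb hε))
    _ = 20 * M ^ 2 * ε ^ 2 := by
      simp only [mul_pow, sq_abs, integral_const, probReal_univ, smul_eq_mul, one_mul]; ring

/-- **Differential of the exponential-normalization map.**
For a probability measure `ν`, bounded mean-zero `h`, and bounded mean-zero direction `ξ`,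
the map `ε ↦ w_{h+εξ}` (with `w_g = e^g / ∫ e^g dν`) is differentiable at `ε = 0`
in `L¹(ν)`, with derivative `w_h · (ξ − E_{ρ_h}[ξ])`, `E_{ρ_h}[ξ] = ∫ ξ w_h dν`. -/
theorem exp_normalization_hasDerivAt_L1
    {Ω : Type*} [MeasurableSpace Ω] (ν : Measure Ω) [IsProbabilityMeasure ν]
    (h ξ : Ω → ℝ) (hhm : Measurable h) (hξm : Measurable ξ)
    (M : ℝ) (hhb : ∀ x, |h x| ≤ M) (hξb : ∀ x, |ξ x| ≤ M)
    (hh0 : ∫ x, h x ∂ν = 0) (hξ0 : ∫ x, ξ x ∂ν = 0)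
    (w : (Ω → ℝ) → Ω → ℝ)
    (hw : ∀ g : Ω → ℝ, w g = fun x => Real.exp (g x) / ∫ y, Real.exp (g y) ∂ν) :
    Tendsto
      (fun ε : ℝ =>
        (∫ x, |w (fun y => h y + ε * ξ y) x - w h x
            - ε * (w h x * (ξ x - ∫ y, ξ y * w h y ∂ν))| ∂ν) / |ε|)
      (𝓝[≠] (0:ℝ)) (𝓝 0) :=
  exp_normalization_hasDerivAt_L1_general ν h ξ hhm hξm M hhb hξb w hw
end

section
/- Let ν₀ be a probability measure and h : [0,T] → L^∞(ν₀) a C¹ path (in the L^∞ norm) with each h(t) mean-zero. Set ρ_t the probability measure with density w_{h(t)} = e^{h(t)} / ∫ e^{h(t)} dν₀. Then for each t, ∂_t log w_{h(t)} = ḣ(t) − E_{ρ_t}[ḣ(t)], where E_{ρ_t}[ḣ(t)] = ∫ ḣ(t) w_{h(t)} dν₀. -/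
/-!
Since `log w_g = g - log Z(g)` with `Z(g) = ∫ e^g dν`, the claim splits into the given
differentiability of `h` and the scalar derivative `(log Z)' = Z'/Z` along the path. The map
`g ↦ e^g` is differentiable in `L^∞` (the Taylor remainder `e^d - 1 - d` is `O(‖d‖_∞²)`) and
integration against a finite measure is `L^∞`-continuous, so `Z' = ∫ e^{h(t)} ḣ(t) dν`,
and `Z'/Z = ∫ ḣ(t) w_{h(t)} dν`.
-/

open MeasureTheory Filter Topology Asymptotics

namespace MeasureTheory

variable {Ω : Type*} [MeasurableSpace Ω] {ν : Measure Ω} {f : ℝ → Ω → ℝ} {f' : Ω → ℝ} {t : ℝ}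

def HasLinftyDerivAt (ν : Measure Ω) (f : ℝ → Ω → ℝ) (f' : Ω → ℝ) (t : ℝ) : Prop :=
  ∀ δ > 0, ∀ᶠ ε in 𝓝 (0 : ℝ), ∀ᵐ x ∂ν, |f (t + ε) x - f t x - ε * f' x| ≤ δ * |ε|

theorem hasLinftyDerivAt_iff_tendsto_eLpNorm :
    HasLinftyDerivAt ν f f' t ↔ Tendsto (fun ε : ℝ =>
      eLpNorm (fun x => f (t + ε) x - f t x - ε * f' x) ⊤ ν / ENNReal.ofReal |ε|)
      (𝓝[≠] 0) (𝓝 0) := by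
  have key : ∀ {ε δ : ℝ}, ε ≠ 0 → 0 ≤ δ →
      (eLpNorm (fun x => f (t + ε) x - f t x - ε * f' x) ⊤ ν / ENNReal.ofReal |ε|
        ≤ ENNReal.ofReal δ ↔ ∀ᵐ x ∂ν, |f (t + ε) x - f t x - ε * f' x| ≤ δ * |ε|) := by
    intro ε δ hε hδ
    rw [ENNReal.div_le_iff (by simpa using hε) ENNReal.ofReal_ne_top,
      ← ENNReal.ofReal_mul hδ, eLpNorm_exponent_top]
    constructor
    · intro hle
      filter_upwards [enorm_ae_le_eLpNormEssSup (fun x => f (t + ε) x - f t x - ε * f' x) ν]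
        with x hx
      rw [Real.enorm_eq_ofReal_abs] at hx
      exact (ENNReal.ofReal_le_ofReal_iff (by positivity)).1 (hx.trans hle)
    · intro hbound
      exact eLpNormEssSup_le_of_ae_bound (by simpa only [Real.norm_eq_abs] using hbound)
  constructor
  · intro hf
    refine ENNReal.tendsto_nhds_zero.2 fun e he => ?_
    obtain ⟨δ, hδ, hδpos, hδe⟩ := ENNReal.lt_iff_exists_real_btwn.1 he
    filter_upwards [self_mem_nhdsWithin,
      nhdsWithin_le_nhds (hf δ (ENNReal.ofReal_pos.1 hδpos))] with ε hε hbound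
    exact ((key hε hδ).2 hbound).trans hδe.le
  · intro hf δ hδ
    have hev := ENNReal.tendsto_nhds_zero.1 hf (ENNReal.ofReal δ) (ENNReal.ofReal_pos.2 hδ)
    filter_upwards [eventually_nhdsWithin_iff.1 hev] with ε hε
    rcases eq_or_ne ε 0 with rfl | hε0
    · simp
    · exact (key hε0 hδ.le).1 (hε hε0)

namespace HasLinftyDerivAt

theorem eventually_ae_abs_sub_le {K : ℝ} (hf : HasLinftyDerivAt ν f f' t)
    (hK : ∀ᵐ x ∂ν, |f' x| ≤ K) :
    ∀ᶠ ε in 𝓝 (0 : ℝ), ∀ᵐ x ∂ν, |f (t + ε) x - f t x| ≤ (K + 1) * |ε| := by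
  filter_upwards [hf 1 one_pos] with ε hε
  filter_upwards [hε, hK] with x hx hx'
  calc |f (t + ε) x - f t x| = |(f (t + ε) x - f t x - ε * f' x) + ε * f' x| := by ring_nf
    _ ≤ |f (t + ε) x - f t x - ε * f' x| + |ε| * |f' x| := by
        rw [← abs_mul]; exact abs_add_le _ _
    _ ≤ 1 * |ε| + |ε| * K := by gcongr
    _ = (K + 1) * |ε| := by ring

theorem exp {M K : ℝ} (hf : HasLinftyDerivAt ν f f' t) (hM : ∀ᵐ x ∂ν, f t x ≤ M)
    (hK : ∀ᵐ x ∂ν, |f' x| ≤ K) :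
    HasLinftyDerivAt ν (fun s x => Real.exp (f s x)) (fun x => Real.exp (f t x) * f' x) t := by
  intro δ hδ
  have hsmall : ∀ᶠ ε in 𝓝 (0 : ℝ),
      (K + 1) * |ε| < 1 ∧ Real.exp M * (K + 1) ^ 2 * |ε| < δ / 2 := by
    have hlim : ∀ c : ℝ, Tendsto (fun ε : ℝ => c * |ε|) (𝓝 0) (𝓝 0) := fun c =>
      (continuous_const.mul continuous_abs).tendsto' 0 0 (by simp)
    exact ((hlim _).eventually_lt_const one_pos).and
      ((hlim _).eventually_lt_const (half_pos hδ))
  filter_upwards [hsmall, hf (δ / (2 * Real.exp M)) (by positivity),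
    hf.eventually_ae_abs_sub_le hK] with ε ⟨hinc_small, htaylor_small⟩ hrem hinc
  filter_upwards [hrem, hinc, hM] with x hrem hinc hM
  set d := f (t + ε) x - f t x
  have htaylor : |Real.exp d - 1 - d| ≤ (K + 1) ^ 2 * |ε| * |ε| :=
    calc |Real.exp d - 1 - d| ≤ |d| ^ 2 := by
          rw [sq_abs]; exact Real.abs_exp_sub_one_sub_id_le (hinc.trans hinc_small.le)
      _ ≤ ((K + 1) * |ε|) ^ 2 := pow_le_pow_left₀ (abs_nonneg d) hinc 2
      _ = (K + 1) ^ 2 * |ε| * |ε| := by ring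
  have hsplit : Real.exp (f (t + ε) x) - Real.exp (f t x) - ε * (Real.exp (f t x) * f' x)
      = Real.exp (f t x) * ((Real.exp d - 1 - d) + (d - ε * f' x)) := by
    rw [show f (t + ε) x = f t x + d by ring, Real.exp_add]; ring
  rw [hsplit, abs_mul, abs_of_pos (Real.exp_pos _)]
  calc Real.exp (f t x) * |(Real.exp d - 1 - d) + (d - ε * f' x)|
      ≤ Real.exp M * ((K + 1) ^ 2 * |ε| * |ε| + δ / (2 * Real.exp M) * |ε|) := by
        gcongr
        exact (abs_add_le _ _).trans (add_le_add htaylor hrem)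
    _ = Real.exp M * (K + 1) ^ 2 * |ε| * |ε| + δ / 2 * |ε| := by
        field_simp
    _ ≤ δ / 2 * |ε| + δ / 2 * |ε| := by gcongr
    _ = δ * |ε| := by ring

theorem hasDerivAt_integral [IsFiniteMeasure ν] (hf : HasLinftyDerivAt ν f f' t)
    (hint : ∀ s, Integrable (f s) ν) (hint' : Integrable f' ν) :
    HasDerivAt (fun s => ∫ x, f s x ∂ν) (∫ x, f' x ∂ν) t := by
  rw [hasDerivAt_iff_isLittleO_nhds_zero, isLittleO_iff]
  intro c hc
  have hν : 0 ≤ ν.real Set.univ := measureReal_nonneg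
  filter_upwards [hf (c / (ν.real Set.univ + 1)) (by positivity)] with ε hε
  have hdiff : ∫ x, f (t + ε) x ∂ν - ∫ x, f t x ∂ν - ε • ∫ x, f' x ∂ν
      = ∫ x, (f (t + ε) x - f t x - ε * f' x) ∂ν := by
    rw [integral_sub (f := fun x => f (t + ε) x - f t x) ((hint _).sub (hint _))
        (hint'.const_mul ε),
      integral_sub (hint _) (hint _), integral_const_mul, smul_eq_mul]
  rw [hdiff]
  refine (norm_integral_le_of_norm_le_const (hε.mono fun x hx => hx)).trans ?_
  calc c / (ν.real Set.univ + 1) * |ε| * ν.real Set.univ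
      = c * ‖ε‖ * (ν.real Set.univ / (ν.real Set.univ + 1)) := by
        rw [Real.norm_eq_abs]; ring
    _ ≤ c * ‖ε‖ * 1 := by gcongr; exact (div_le_one (by positivity)).2 (by linarith)
    _ = c * ‖ε‖ := mul_one _

theorem sub_hasDerivAt {g : ℝ → ℝ} {g' : ℝ} (hf : HasLinftyDerivAt ν f f' t)
    (hg : HasDerivAt g g' t) :
    HasLinftyDerivAt ν (fun s x => f s x - g s) (fun x => f' x - g') t := by
  intro δ hδ
  have hg_rem := isLittleO_iff.1 (hasDerivAt_iff_isLittleO_nhds_zero.1 hg) (half_pos hδ)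
  filter_upwards [hf (δ / 2) (half_pos hδ), hg_rem] with ε hfε hgε
  filter_upwards [hfε] with x hx
  rw [smul_eq_mul, Real.norm_eq_abs, Real.norm_eq_abs] at hgε
  calc |f (t + ε) x - g (t + ε) - (f t x - g t) - ε * (f' x - g')|
      = |(f (t + ε) x - f t x - ε * f' x) - (g (t + ε) - g t - ε * g')| := by ring_nf
    _ ≤ |f (t + ε) x - f t x - ε * f' x| + |g (t + ε) - g t - ε * g'| := abs_sub _ _
    _ ≤ δ / 2 * |ε| + δ / 2 * |ε| := add_le_add hx hgε
    _ = δ * |ε| := by ring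

end HasLinftyDerivAt

end MeasureTheory

theorem log_density_evolution_general
    {Ω : Type*} [MeasurableSpace Ω] (ν : Measure Ω) [IsProbabilityMeasure ν]
    (h hd : ℝ → Ω → ℝ)
    (hmeas : ∀ t, Measurable (h t)) (hdmeas : ∀ t, Measurable (hd t))
    (M : ℝ) (hb : ∀ t x, |h t x| ≤ M) (hdb : ∀ t x, |hd t x| ≤ M)
    (w : (Ω → ℝ) → Ω → ℝ)
    (hw : ∀ g : Ω → ℝ, w g = fun x => Real.exp (g x) / ∫ y, Real.exp (g y) ∂ν)
    (t : ℝ)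
    (hC1 : Tendsto (fun ε : ℝ =>
        eLpNorm (fun x => h (t + ε) x - h t x - ε * hd t x) ⊤ ν / ENNReal.ofReal |ε|)
        (𝓝[≠] (0:ℝ)) (𝓝 0)) :
    Tendsto (fun ε : ℝ =>
        eLpNorm (fun x => Real.log (w (h (t + ε)) x) - Real.log (w (h t) x)
          - ε * (hd t x - ∫ y, hd t y * w (h t) y ∂ν)) ⊤ ν / ENNReal.ofReal |ε|)
        (𝓝[≠] (0:ℝ)) (𝓝 0) := by
  have hexp_int : ∀ s, Integrable (fun x => Real.exp (h s x)) ν := fun s =>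
    Integrable.of_bound (hmeas s).exp.aestronglyMeasurable (Real.exp M) (ae_of_all _ fun x => by
      rw [Real.norm_eq_abs, abs_of_pos (Real.exp_pos _)]
      exact Real.exp_le_exp.2 (le_of_abs_le (hb s x)))
  have hZ_pos : ∀ s, 0 < ∫ x, Real.exp (h s x) ∂ν := fun s => integral_exp_pos (hexp_int s)
  have hlog_w : ∀ s x, Real.log (w (h s) x) = h s x - Real.log (∫ y, Real.exp (h s y) ∂ν) := by
    intro s x
    rw [hw, Real.log_div (Real.exp_ne_zero _) (hZ_pos s).ne', Real.log_exp]
  have hmean_w : ∫ y, hd t y * w (h t) y ∂ν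
      = (∫ y, Real.exp (h t y) * hd t y ∂ν) / ∫ y, Real.exp (h t y) ∂ν := by
    rw [hw, ← integral_div]
    congr 1 with y
    ring
  have hh : HasLinftyDerivAt ν h (hd t) t := hasLinftyDerivAt_iff_tendsto_eLpNorm.2 hC1
  have hexp := hh.exp (ae_of_all _ fun x => le_of_abs_le (hb t x)) (ae_of_all _ (hdb t))
  have hlogZ := (hexp.hasDerivAt_integral hexp_int ((hexp_int t).mul_bdd
    (hdmeas t).aestronglyMeasurable (ae_of_all _ (hdb t)))).log (hZ_pos t).ne'
  have hlog := hasLinftyDerivAt_iff_tendsto_eLpNorm.1 (hh.sub_hasDerivAt hlogZ)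
  simp only [hlog_w, hmean_w]
  exact hlog

/-- **Log-density evolution along coordinate paths.**
If `t ↦ h(t)` is a C¹ path into `L^∞(ν)` of mean-zero bounded functions, and
`ρ_t` has density `w_{h(t)} = e^{h(t)}/∫ e^{h(t)} dν`, then
`∂_t log w_{h(t)} = ḣ(t) − E_{ρ_t}[ḣ(t)]`, the derivative taken in `L^∞(ν)`. -/
theorem log_density_evolution
    {Ω : Type*} [MeasurableSpace Ω] (ν : Measure Ω) [IsProbabilityMeasure ν]
    (T : ℝ) (h hd : ℝ → Ω → ℝ)
    (hmeas : ∀ t, Measurable (h t)) (hdmeas : ∀ t, Measurable (hd t))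
    (M : ℝ) (hb : ∀ t x, |h t x| ≤ M) (hdb : ∀ t x, |hd t x| ≤ M)
    (hmean : ∀ t, ∫ x, h t x ∂ν = 0)
    (w : (Ω → ℝ) → Ω → ℝ)
    (hw : ∀ g : Ω → ℝ, w g = fun x => Real.exp (g x) / ∫ y, Real.exp (g y) ∂ν)
    (t : ℝ) (ht : t ∈ Set.Icc 0 T)
    (hC1 : Tendsto (fun ε : ℝ =>
        eLpNorm (fun x => h (t + ε) x - h t x - ε * hd t x) ⊤ ν / ENNReal.ofReal |ε|)
        (𝓝[≠] (0:ℝ)) (𝓝 0)) :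
    Tendsto (fun ε : ℝ =>
        eLpNorm (fun x => Real.log (w (h (t + ε)) x) - Real.log (w (h t) x)
          - ε * (hd t x - ∫ y, hd t y * w (h t) y ∂ν)) ⊤ ν / ENNReal.ofReal |ε|)
        (𝓝[≠] (0:ℝ)) (𝓝 0) :=
  log_density_evolution_general ν h hd hmeas hdmeas M hb hdb w hw t hC1
end
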